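/- arXiv:0811.1279 — 4 statements merged into one kernel-verified Lean document; each statement's English description precedes it below -/
import Mathlib

section
/- Let N ≥ 1, φ > 0, and c : ℕ → [0,1] with c(0) = 1 satisfying ∑_{n=0}^∞ φ^n ∏_{i=0}^n c(i) < ∞. Then the random walk on ℕ^N with transitions as in the PRP intra-patch dynamics (coordinate j moves up with probability φ·c(i_j)/((1+φ)N), down with probability 1/((1+φ)N), loop with the remaining probability) is positive recurrent. -/
/-!
The product measure `ν(i) = ∏ⱼ w(iⱼ)` with `w(n) = φⁿ ∏_{k<n} c(k)` is reversible for the walk: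
a step `n → n + 1` in one coordinate is `φ c(n)` times as likely as the reverse step, and
`w(n + 1) = φ c(n) w(n)`. A reversible measure of a stochastic kernel is invariant, and the
summability hypothesis says exactly that `Z = ∑ₙ w(n)` is finite, so `ν / Z^N` is a stationary
probability distribution.
-/

open scoped Classical

/-- Transition kernel on `ℕ^N` of the intra-patch walk of the PRP: coordinate `j`
increases by `1` with probability `φ·c(i_j)/((1+φ)N)`, decreases by `1` with probability
`1/((1+φ)N)` (if `i_j ≥ 1`), and the walk stays put with the remaining probability. -/
noncomputable def prpKernel (N : ℕ) (phi : ℝ) (c : ℕ → ℝ) :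
    (Fin N → ℕ) → (Fin N → ℕ) → ℝ := fun f g =>
  (∑ j : Fin N,
      ((if g = Function.update f j (f j + 1) then phi * c (f j) / ((1 + phi) * N) else 0) +
        (if 0 < f j ∧ g = Function.update f j (f j - 1) then 1 / ((1 + phi) * N) else 0))) +
    (if g = f then
      1 - ∑ j : Fin N, (phi * c (f j) / ((1 + phi) * N) +
        (if 0 < f j then 1 / ((1 + phi) * N) else 0))
    else 0)

open Finset

theorem hasSum_fin_pi_prod {α : Type*} {w : α → ℝ} (hw : 0 ≤ w) {Z : ℝ} (hZ : HasSum w Z)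
    (n : ℕ) : HasSum (fun f : Fin n → α => ∏ j, w (f j)) (Z ^ n) := by
  induction n with
  | zero => simp
  | succ n ih =>
    set v := fun f : Fin n → α => ∏ j, w (f j)
    have hv : 0 ≤ v := fun f => prod_nonneg fun j _ => hw (f j)
    have hprod : HasSum (fun p : α × (Fin n → α) => w p.1 * v p.2) (Z * Z ^ n) :=
      hZ.mul ih (Summable.mul_of_nonneg (f := w) (g := v) hZ.summable ih.summable hw hv)
    rw [pow_succ', ← (Fin.consEquiv fun _ => α).hasSum_iff]
    convert hprod using 2 with p
    simp [v, Fin.consEquiv, Fin.prod_univ_succ]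

theorem tsum_mul_eq_of_detailed_balance {α : Type*} {μ : α → ℝ} {P : α → α → ℝ}
    (hP : ∀ x, HasSum (P x) 1) (hμP : ∀ x y, μ x * P x y = μ y * P y x) (y : α) :
    ∑' x, μ x * P x y = μ y :=
  calc ∑' x, μ x * P x y = ∑' x, μ y * P y x := tsum_congr fun x => hμP x y
    _ = μ y := by rw [tsum_mul_left, (hP y).tsum_eq, mul_one]

theorem eq_update_add_one_iff {ι : Type*} [DecidableEq ι] {f g : ι → ℕ} {j : ι} :
    g = Function.update f j (f j + 1) ↔ 0 < g j ∧ f = Function.update g j (g j - 1) := by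
  constructor
  · rintro rfl
    simp
  · rintro ⟨hpos, rfl⟩
    rw [Function.update_idem, Function.update_self, Nat.sub_add_cancel hpos,
      Function.update_eq_self]

theorem prod_apply_update {ι α M : Type*} [Fintype ι] [DecidableEq ι] [CommMonoid M]
    (w : α → M) (f : ι → α) (j : ι) (a : α) :
    ∏ k, w (Function.update f j a k) = w a * ∏ k ∈ univ.erase j, w (f k) := by
  rw [← mul_prod_erase univ _ (mem_univ j), Function.update_self]
  congr 1
  exact prod_congr rfl fun k hk => by rw [Function.update_of_ne (ne_of_mem_erase hk)]

section prpKernel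

variable {N : ℕ} {phi : ℝ} {c w : ℕ → ℝ}

theorem prpKernel_hasSum_one (f : Fin N → ℕ) :
    HasSum (prpKernel N phi c f) 1 := by
  have hmove : ∀ j : Fin N, HasSum
      (fun g : Fin N → ℕ =>
        (if g = Function.update f j (f j + 1) then phi * c (f j) / ((1 + phi) * N) else 0) +
          (if 0 < f j ∧ g = Function.update f j (f j - 1) then 1 / ((1 + phi) * N) else 0))
      (phi * c (f j) / ((1 + phi) * N) + (if 0 < f j then 1 / ((1 + phi) * N) else 0)) := by
    intro j
    refine (hasSum_ite_eq _ _).add ?_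
    by_cases h : 0 < f j
    · simpa [h] using hasSum_ite_eq (Function.update f j (f j - 1)) (1 / ((1 + phi) * N))
    · simp [h]
  unfold prpKernel
  convert (hasSum_sum (s := univ) fun j _ => hmove j).add (hasSum_ite_eq f _) using 1
  exact (add_sub_cancel _ _).symm

theorem prpKernel_up_detailed_balance (hw : ∀ n, w (n + 1) = phi * c n * w n)
    (f g : Fin N → ℕ) (j : Fin N) :
    (∏ k, w (f k)) *
        (if g = Function.update f j (f j + 1) then phi * c (f j) / ((1 + phi) * N) else 0) =
      (∏ k, w (g k)) *
        (if 0 < g j ∧ f = Function.update g j (g j - 1) then 1 / ((1 + phi) * N) else 0) := by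
  by_cases h : g = Function.update f j (f j + 1)
  · rw [if_pos h, if_pos (eq_update_add_one_iff.mp h), h, prod_apply_update,
      ← mul_prod_erase univ _ (mem_univ j), hw]
    ring
  · rw [if_neg h, if_neg (mt eq_update_add_one_iff.mpr h), mul_zero, mul_zero]

theorem prpKernel_detailed_balance (hw : ∀ n, w (n + 1) = phi * c n * w n) (f g : Fin N → ℕ) :
    (∏ k, w (f k)) * prpKernel N phi c f g = (∏ k, w (g k)) * prpKernel N phi c g f := by
  simp only [prpKernel, mul_add, mul_sum]
  congr 1
  · refine sum_congr rfl fun j _ => ?_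
    rw [prpKernel_up_detailed_balance hw f g j, ← prpKernel_up_detailed_balance hw g f j]
    ring
  · by_cases h : g = f
    · subst h; rfl
    · rw [if_neg h, if_neg (Ne.symm h), mul_zero, mul_zero]

end prpKernel

section prpWeight

variable {phi : ℝ} {c : ℕ → ℝ}

noncomputable def prpWeight (phi : ℝ) (c : ℕ → ℝ) (n : ℕ) : ℝ :=
  phi ^ n * ∏ i ∈ range n, c i

theorem prpWeight_zero : prpWeight phi c 0 = 1 := by
  simp [prpWeight]

theorem prpWeight_succ (n : ℕ) : prpWeight phi c (n + 1) = phi * c n * prpWeight phi c n := by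
  simp only [prpWeight, pow_succ, prod_range_succ]
  ring

theorem prpWeight_nonneg (hphi : 0 ≤ phi) (hc : ∀ n, 0 ≤ c n) : 0 ≤ prpWeight phi c :=
  fun n => mul_nonneg (pow_nonneg hphi n) (prod_nonneg fun i _ => hc i)

theorem summable_prpWeight
    (hsum : Summable fun n : ℕ => phi ^ n * ∏ i ∈ range (n + 1), c i) :
    Summable (prpWeight phi c) := by
  have hshift : (fun n => prpWeight phi c (n + 1)) =
      fun n => phi * (phi ^ n * ∏ i ∈ range (n + 1), c i) := by
    funext n
    simp only [prpWeight, pow_succ]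
    ring
  exact (summable_nat_add_iff 1).mp (hshift ▸ hsum.mul_left phi)

end prpWeight

theorem stmt3_general (N : ℕ) (phi : ℝ) (hphi : 0 < phi) (c : ℕ → ℝ)
    (hrange : ∀ n, c n ∈ Set.Icc (0 : ℝ) 1)
    (hsum : Summable (fun n : ℕ => phi ^ n * ∏ i ∈ Finset.range (n + 1), c i)) :
    ∃ pi : (Fin N → ℕ) → ℝ, (∀ f, 0 ≤ pi f) ∧ HasSum pi 1 ∧
      ∀ g, (∑' f, pi f * prpKernel N phi c f g) = pi g := by
  set w := prpWeight phi c
  have hw : 0 ≤ w := prpWeight_nonneg hphi.le fun n => (hrange n).1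
  obtain ⟨Z, hZ⟩ := summable_prpWeight hsum
  have hZ_pos : 0 < Z ^ N := by
    have hZ_one : 1 ≤ Z := prpWeight_zero (phi := phi) (c := c) ▸ le_hasSum hZ 0 fun n _ => hw n
    positivity
  refine ⟨fun f => (∏ j, w (f j)) / Z ^ N,
    fun f => div_nonneg (prod_nonneg fun j _ => hw (f j)) hZ_pos.le, ?_,
    tsum_mul_eq_of_detailed_balance prpKernel_hasSum_one fun f g => ?_⟩
  · simpa [div_self hZ_pos.ne'] using (hasSum_fin_pi_prod hw hZ N).div_const (Z ^ N)
  · rw [div_mul_eq_mul_div, div_mul_eq_mul_div, prpKernel_detailed_balance prpWeight_succ]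

/-- If `∑_{n=0}^∞ φ^n ∏_{i=0}^n c(i) < ∞`, the intra-patch walk of the PRP on `ℕ^N` is
positive recurrent: it admits a stationary probability distribution. -/
theorem stmt3 (N : ℕ) (hN : 1 ≤ N) (phi : ℝ) (hphi : 0 < phi) (c : ℕ → ℝ)
    (hrange : ∀ n, c n ∈ Set.Icc (0 : ℝ) 1) (h0 : c 0 = 1)
    (hsum : Summable (fun n : ℕ => phi ^ n * ∏ i ∈ Finset.range (n + 1), c i)) :
    ∃ pi : (Fin N → ℕ) → ℝ, (∀ f, 0 ≤ pi f) ∧ HasSum pi 1 ∧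
      ∀ g, (∑' f, pi f * prpKernel N phi c f g) = pi g :=
  stmt3_general N phi hphi c hrange hsum
end

section
/- For κ ≥ 1 and φ, λ > 0, the stationary empty-site fraction of the mean-field logistic IRP satisfies u_0 = (1/λ)·(1 + ∑_{i=1}^{κ-1} φ^i ∏_{j=1}^i (1 - j/κ))^{-1}, and as κ → ∞, u_0 converges monotonically (decreasing) to max(0, (1-φ)/λ). -/
/-!
The denominator `1 + ∑_{i=1}^{κ-1} φ^i ∏_{j=1}^i (1 - j/κ)` increases with `κ`: every factor
`1 - j/κ` grows and new nonnegative terms appear. Hence `u₀` decreases to its infimum `ℓ`.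
Termwise the denominator is dominated by the geometric series `∑ φ^i`, which gives `ℓ ≥ (1-φ)/λ`.
Conversely, each truncation `1 + ∑_{i=1}^N φ^i ∏_{j=1}^i (1 - j/κ)` tends to `∑_{i=0}^N φ^i` and stays
below `1/(λℓ)`; if `ℓ > 0` the geometric series is therefore bounded, forcing `φ < 1` and
`1/(1-φ) ≤ 1/(λℓ)`.
-/

/-- Stationary empty-site fraction of the mean-field logistic IRP with cluster size `κ`:
`u₀ = (1/λ)·(1 + ∑_{i=1}^{κ-1} φ^i ∏_{j=1}^i (1 - j/κ))⁻¹`. -/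
noncomputable def u0MF (lam phi : ℝ) (κ : ℕ) : ℝ :=
  (1 / lam) *
    (1 + ∑ i ∈ Finset.Icc 1 (κ - 1), phi ^ i * ∏ j ∈ Finset.Icc 1 i, (1 - (j : ℝ) / κ))⁻¹

open Finset Filter Topology

noncomputable def fallingRatio (κ i : ℕ) : ℝ :=
  ∏ j ∈ Icc 1 i, (1 - (j : ℝ) / κ)

noncomputable def fallingSeries (phi : ℝ) (κ N : ℕ) : ℝ :=
  ∑ i ∈ Icc 1 N, phi ^ i * fallingRatio κ i

lemma one_add_sum_Icc_pow {R : Type*} [Semiring R] (x : R) (N : ℕ) :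
    1 + ∑ i ∈ Icc 1 N, x ^ i = ∑ i ∈ range (N + 1), x ^ i := by
  rw [range_eq_Ico, sum_eq_sum_Ico_succ_bot N.succ_pos]
  simp only [zero_add, Nat.succ_eq_add_one, Ico_add_one_right_eq_Icc, pow_zero]

lemma lt_one_and_inv_one_sub_le_of_sum_pow_le {x c : ℝ} (hx : 0 ≤ x)
    (h : ∀ N, 1 + ∑ i ∈ Icc 1 N, x ^ i ≤ c) : x < 1 ∧ (1 - x)⁻¹ ≤ c := by
  have hsum (n : ℕ) : ∑ i ∈ range n, x ^ i ≤ c :=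
    calc ∑ i ∈ range n, x ^ i ≤ ∑ i ∈ range (n + 1), x ^ i :=
          sum_le_sum_of_subset_of_nonneg (range_subset_range.2 n.le_succ)
            fun i _ _ => pow_nonneg hx i
      _ ≤ c := one_add_sum_Icc_pow x n ▸ h n
  have hx1 : x < 1 := by
    simpa [abs_of_nonneg hx] using summable_geometric_iff_norm_lt_one.1
      (summable_of_sum_range_le (fun n => pow_nonneg hx n) hsum)
  exact ⟨hx1, tsum_geometric_of_lt_one hx hx1 ▸
    Real.tsum_le_of_sum_range_le (fun n => pow_nonneg hx n) hsum⟩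

section fallingRatio

variable {κ κ' i : ℕ}

lemma one_sub_div_nonneg_of_le {j : ℕ} (h : j ≤ κ) : 0 ≤ 1 - (j : ℝ) / κ :=
  sub_nonneg.2 (div_le_one_of_le₀ (by exact_mod_cast h) κ.cast_nonneg)

lemma fallingRatio_nonneg (h : i ≤ κ) : 0 ≤ fallingRatio κ i :=
  prod_nonneg fun _ hj => one_sub_div_nonneg_of_le ((mem_Icc.1 hj).2.trans h)

lemma fallingRatio_le_one (h : i ≤ κ) : fallingRatio κ i ≤ 1 :=
  prod_le_one (fun _ hj => one_sub_div_nonneg_of_le ((mem_Icc.1 hj).2.trans h))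
    fun _ _ => sub_le_self _ (by positivity)

lemma fallingRatio_le_fallingRatio (hi : i ≤ κ) (hκ : κ ≤ κ') :
    fallingRatio κ i ≤ fallingRatio κ' i := by
  refine prod_le_prod (fun _ hj => one_sub_div_nonneg_of_le ((mem_Icc.1 hj).2.trans hi))
    fun j hj => ?_
  obtain ⟨hj1, hji⟩ := mem_Icc.1 hj
  have hκpos : (0 : ℝ) < κ := by exact_mod_cast (hj1.trans (hji.trans hi))
  exact sub_le_sub_left (div_le_div_of_nonneg_left j.cast_nonneg hκpos (by exact_mod_cast hκ)) 1

lemma tendsto_fallingRatio (i : ℕ) : Tendsto (fun κ => fallingRatio κ i) atTop (𝓝 1) := by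
  simpa [fallingRatio] using tendsto_finsetProd (Icc 1 i) fun j _ =>
    (tendsto_const_nhds (x := (1 : ℝ))).sub (tendsto_const_div_atTop_nhds_zero_nat (j : ℝ))

end fallingRatio

section fallingSeries

variable {phi : ℝ} {κ κ' N M : ℕ}

lemma fallingSeries_nonneg (hphi : 0 ≤ phi) (h : N ≤ κ) : 0 ≤ fallingSeries phi κ N :=
  sum_nonneg fun i hi => mul_nonneg (pow_nonneg hphi i)
    (fallingRatio_nonneg ((mem_Icc.1 hi).2.trans h))

lemma fallingSeries_mono_right (hphi : 0 ≤ phi) (hNM : N ≤ M) (hM : M ≤ κ) :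
    fallingSeries phi κ N ≤ fallingSeries phi κ M :=
  sum_le_sum_of_subset_of_nonneg (Icc_subset_Icc_right hNM) fun i hi _ =>
    mul_nonneg (pow_nonneg hphi i) (fallingRatio_nonneg ((mem_Icc.1 hi).2.trans hM))

lemma fallingSeries_mono_left (hphi : 0 ≤ phi) (hN : N ≤ κ) (hκ : κ ≤ κ') :
    fallingSeries phi κ N ≤ fallingSeries phi κ' N :=
  sum_le_sum fun i hi => mul_le_mul_of_nonneg_left
    (fallingRatio_le_fallingRatio ((mem_Icc.1 hi).2.trans hN) hκ) (pow_nonneg hphi i)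

lemma fallingSeries_le_sum_pow (hphi : 0 ≤ phi) (hN : N ≤ κ) :
    fallingSeries phi κ N ≤ ∑ i ∈ Icc 1 N, phi ^ i :=
  sum_le_sum fun i hi => mul_le_of_le_one_right (pow_nonneg hphi i)
    (fallingRatio_le_one ((mem_Icc.1 hi).2.trans hN))

lemma tendsto_fallingSeries (phi : ℝ) (N : ℕ) :
    Tendsto (fun κ => fallingSeries phi κ N) atTop (𝓝 (∑ i ∈ Icc 1 N, phi ^ i)) := by
  simpa [fallingSeries] using tendsto_finsetSum (Icc 1 N) fun i _ =>
    (tendsto_const_nhds (x := phi ^ i)).mul (tendsto_fallingRatio i)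

end fallingSeries

noncomputable def u0Denom (phi : ℝ) (κ : ℕ) : ℝ :=
  1 + fallingSeries phi κ (κ - 1)

section u0MF

variable {lam phi : ℝ}

lemma u0MF_eq (lam phi : ℝ) (κ : ℕ) : u0MF lam phi κ = (lam * u0Denom phi κ)⁻¹ := by
  rw [u0MF, mul_inv, one_div]
  rfl

lemma u0Denom_pos (hphi : 0 ≤ phi) (κ : ℕ) : 0 < u0Denom phi κ := by
  rw [u0Denom]
  linarith [fallingSeries_nonneg hphi (Nat.sub_le κ 1)]

lemma u0Denom_mono (hphi : 0 ≤ phi) : Monotone (u0Denom phi) := by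
  intro κ κ' h
  rw [u0Denom, u0Denom]
  gcongr 1 + ?_
  exact (fallingSeries_mono_left hphi (Nat.sub_le κ 1) h).trans
    (fallingSeries_mono_right hphi (Nat.sub_le_sub_right h 1) (Nat.sub_le κ' 1))

lemma one_add_fallingSeries_le_u0Denom (hphi : 0 ≤ phi) {κ N : ℕ} (h : N < κ) :
    1 + fallingSeries phi κ N ≤ u0Denom phi κ := by
  rw [u0Denom]
  gcongr 1 + ?_
  exact fallingSeries_mono_right hphi (Nat.le_sub_one_of_lt h) (Nat.sub_le κ 1)

lemma one_sub_mul_u0Denom_le_one (hphi : 0 ≤ phi) (κ : ℕ) : (1 - phi) * u0Denom phi κ ≤ 1 := by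
  rcases le_total phi 1 with h | h
  · calc (1 - phi) * u0Denom phi κ ≤ (1 - phi) * ∑ i ∈ range (κ - 1 + 1), phi ^ i := by
          rw [u0Denom, ← one_add_sum_Icc_pow]
          gcongr
          exact fallingSeries_le_sum_pow hphi (Nat.sub_le κ 1)
      _ = 1 - phi ^ (κ - 1 + 1) := mul_neg_geom_sum phi _
      _ ≤ 1 := sub_le_self _ (pow_nonneg hphi _)
  · nlinarith [u0Denom_pos hphi κ]

lemma u0MF_antitone (hlam : 0 < lam) (hphi : 0 ≤ phi) : Antitone (u0MF lam phi) := by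
  intro κ κ' h
  have := u0Denom_pos hphi κ
  rw [u0MF_eq, u0MF_eq]
  gcongr
  exact u0Denom_mono hphi h

lemma max_le_u0MF (hlam : 0 < lam) (hphi : 0 ≤ phi) (κ : ℕ) :
    max 0 ((1 - phi) / lam) ≤ u0MF lam phi κ := by
  have hD := u0Denom_pos hphi κ
  rw [u0MF_eq]
  refine max_le (by positivity) ?_
  calc (1 - phi) / lam = (1 - phi) * u0Denom phi κ / (lam * u0Denom phi κ) := by field_simp
    _ ≤ 1 / (lam * u0Denom phi κ) := by gcongr; exact one_sub_mul_u0Denom_le_one hphi κ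
    _ = _ := one_div _

lemma bddBelow_range_u0MF (hlam : 0 < lam) (hphi : 0 ≤ phi) :
    BddBelow (Set.range (u0MF lam phi)) :=
  ⟨0, Set.forall_mem_range.2 fun κ => (le_max_left _ _).trans (max_le_u0MF hlam hphi κ)⟩

lemma iInf_u0MF_le (hlam : 0 < lam) (hphi : 0 ≤ phi) :
    ⨅ κ, u0MF lam phi κ ≤ max 0 ((1 - phi) / lam) := by
  set ℓ := ⨅ κ, u0MF lam phi κ
  rcases le_or_gt ℓ 0 with hℓ | hℓ
  · exact hℓ.trans (le_max_left _ _)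
  have hbound (N : ℕ) : 1 + ∑ i ∈ Icc 1 N, phi ^ i ≤ (lam * ℓ)⁻¹ := by
    refine le_of_tendsto ((tendsto_fallingSeries phi N).const_add 1)
      (eventually_atTop.2 ⟨N + 1, fun κ hκ => ?_⟩)
    calc 1 + fallingSeries phi κ N ≤ u0Denom phi κ := one_add_fallingSeries_le_u0Denom hphi hκ
      _ = (lam * u0MF lam phi κ)⁻¹ := by
        rw [u0MF_eq]
        field_simp
      _ ≤ (lam * ℓ)⁻¹ := by gcongr; exact ciInf_le (bddBelow_range_u0MF hlam hphi) κ
  obtain ⟨hphi1, hinv⟩ := lt_one_and_inv_one_sub_le_of_sum_pow_le hphi hbound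
  have : lam * ℓ ≤ 1 - phi := by
    rwa [inv_le_inv₀ (sub_pos.2 hphi1) (by positivity)] at hinv
  exact ((le_div_iff₀' hlam).2 this).trans (le_max_right _ _)

end u0MF

/-- The map `κ ↦ u₀(κ)` is nonincreasing (for `κ ≥ 1`) and converges, as `κ → ∞`,
to `max(0, (1-φ)/λ)`. -/
theorem stmt4 (lam phi : ℝ) (hlam : 0 < lam) (hphi : 0 < phi) :
    (∀ κ₁ κ₂ : ℕ, 1 ≤ κ₁ → κ₁ ≤ κ₂ → u0MF lam phi κ₂ ≤ u0MF lam phi κ₁) ∧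
    Filter.Tendsto (u0MF lam phi) Filter.atTop (nhds (max 0 ((1 - phi) / lam))) := by
  have hanti := u0MF_antitone hlam hphi.le
  refine ⟨fun _ _ _ h => hanti h, ?_⟩
  convert tendsto_atTop_ciInf hanti (bddBelow_range_u0MF hlam hphi.le) using 2
  exact le_antisymm (le_ciInf (max_le_u0MF hlam hphi.le)) (iInf_u0MF_le hlam hphi.le)
end

section
/- Let (N_i) be a nondecreasing sequence of positive integers and (c_i) a nondecreasing sequence of functions ℕ → [0,1] with c_i(0) = 1, each c_i nonincreasing in its argument, and c_∞ = pointwise limit. Then the condition '(N_i → ∞) or (c_∞ ≡ 1)' holds if and only if for every M ∈ ℕ, min over functions f : {1,…,N_i} → ℕ with ∑_j f(j) = M of (1/N_i)·∑_{j=1}^{N_i} c_i(f(j)) tends to 1 as i → ∞. -/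
/-!
If `Nᵢ → ∞`, an allocation of `M` particles leaves at least `Nᵢ - M` sites empty, each
contributing `cᵢ(0) = 1`, so the minimal average is squeezed between `1 - M/Nᵢ` and `1`.
If `c_∞ ≡ 1`, monotonicity of `cᵢ` bounds every term below by `cᵢ(M) → 1`. Conversely, if
`Nᵢ ≤ B` for all `i` and `c_∞(j) < 1`, then `M = B·j` particles can be spread so that every
site carries at least `j`, which keeps the minimal average below `cᵢ(j) → c_∞(j) < 1`.
-/

/-- The minimum, over allocations `f` of `M` particles among `N` sites, of the average
acceptance probability `(1/N)·∑_{j=1}^N c(f(j))`. -/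
noncomputable def minAvg (N : ℕ) (c : ℕ → ℝ) (M : ℕ) : ℝ :=
  sInf {r : ℝ | ∃ f : Fin N → ℕ, (∑ j, f j) = M ∧ r = (∑ j, c (f j)) / N}

open Filter

lemma exists_sum_eq_of_mul_le {N a M : ℕ} (hN : 0 < N) (h : N * a ≤ M) :
    ∃ f : Fin N → ℕ, (∀ k, a ≤ f k) ∧ ∑ k, f k = M := by
  refine ⟨fun k => a + if k = ⟨0, hN⟩ then M - N * a else 0, fun k => Nat.le_add_right _ _, ?_⟩
  simp only [Finset.sum_add_distrib, Finset.sum_ite_eq', Finset.mem_univ, if_true,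
    Finset.sum_const, Finset.card_univ, Fintype.card_fin, smul_eq_mul]
  omega

section minAvg

variable {N M : ℕ} {c : ℕ → ℝ}

lemma minAvg_le_avg (hc : ∀ n, 0 ≤ c n) {f : Fin N → ℕ} (hf : ∑ k, f k = M) :
    minAvg N c M ≤ (∑ k, c (f k)) / N :=
  csInf_le ⟨0, by
    rintro r ⟨g, -, rfl⟩; exact div_nonneg (Finset.sum_nonneg fun k _ => hc _) N.cast_nonneg⟩ ⟨f, hf, rfl⟩

lemma le_minAvg (hN : 0 < N) {b : ℝ}
    (h : ∀ f : Fin N → ℕ, ∑ k, f k = M → b ≤ (∑ k, c (f k)) / N) :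
    b ≤ minAvg N c M := by
  obtain ⟨f, -, hf⟩ := exists_sum_eq_of_mul_le (a := 0) hN (Nat.zero_le M)
  refine le_csInf ⟨_, f, hf, rfl⟩ ?_
  rintro r ⟨g, hg, rfl⟩
  exact h g hg

lemma minAvg_le_of_mul_le (hN : 0 < N) (hc : ∀ n, 0 ≤ c n) {a : ℕ} (h : N * a ≤ M) {b : ℝ}
    (hb : ∀ n, a ≤ n → c n ≤ b) : minAvg N c M ≤ b := by
  obtain ⟨f, hfa, hf⟩ := exists_sum_eq_of_mul_le hN h
  refine (minAvg_le_avg hc hf).trans ?_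
  rw [div_le_iff₀ (Nat.cast_pos.mpr hN)]
  calc ∑ k, c (f k) ≤ ∑ _k : Fin N, b := Finset.sum_le_sum fun k _ => hb _ (hfa k)
    _ = b * N := by simp [mul_comm]

lemma one_sub_div_le_minAvg (hN : 0 < N) (hc0 : c 0 = 1) (hc : ∀ n, 0 ≤ c n) :
    1 - (M : ℝ) / N ≤ minAvg N c M := by
  have hterm : ∀ n : ℕ, 1 - (n : ℝ) ≤ c n := by
    rintro (_ | n)
    · simp [hc0]
    · have := hc (n + 1); push_cast; linarith
  refine le_minAvg hN fun f hf => ?_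
  have hNpos : (0 : ℝ) < N := Nat.cast_pos.mpr hN
  rw [le_div_iff₀ hNpos, sub_mul, one_mul, div_mul_cancel₀ _ hNpos.ne']
  calc (N : ℝ) - M = ∑ k, (1 - (f k : ℝ)) := by
        simp [Finset.sum_sub_distrib, ← hf]
    _ ≤ ∑ k, c (f k) := Finset.sum_le_sum fun k _ => hterm (f k)

lemma apply_le_minAvg (hN : 0 < N) (hc : Antitone c) : c M ≤ minAvg N c M := by
  refine le_minAvg hN fun f hf => ?_
  rw [le_div_iff₀ (Nat.cast_pos.mpr hN)]
  calc c M * N = ∑ _k : Fin N, c M := by simp [mul_comm]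
    _ ≤ ∑ k, c (f k) := Finset.sum_le_sum fun k _ =>
        hc (hf ▸ Finset.single_le_sum (fun _ _ => Nat.zero_le _) (Finset.mem_univ k))

end minAvg

theorem stmt7_general (N : ℕ → ℕ) (c : ℕ → ℕ → ℝ) (cinf : ℕ → ℝ)
    (hN1 : ∀ i, 1 ≤ N i) (hNmono : ∀ i, N i ≤ N (i + 1))
    (hrange : ∀ i j, c i j ∈ Set.Icc (0 : ℝ) 1)
    (h0 : ∀ i, c i 0 = 1)
    (hdec : ∀ i j, c i (j + 1) ≤ c i j)
    (hlim : ∀ j, Filter.Tendsto (fun i => c i j) Filter.atTop (nhds (cinf j))) :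
    (Filter.Tendsto N Filter.atTop Filter.atTop ∨ ∀ j, cinf j = 1) ↔
      ∀ M : ℕ, Filter.Tendsto (fun i => minAvg (N i) (c i) M) Filter.atTop (nhds 1) := by
  have hc i : ∀ n, 0 ≤ c i n := fun n => (hrange i n).1
  have hanti i : Antitone (c i) := antitone_nat_of_succ_le (hdec i)
  have hub M i : minAvg (N i) (c i) M ≤ 1 :=
    minAvg_le_of_mul_le (a := 0) (hN1 i) (hc i) (by omega) fun n _ => (hrange i n).2
  constructor
  · rintro (hNt | hcinf) M
    · have hlow : Tendsto (fun i => 1 - (M : ℝ) / N i) atTop (nhds 1) := by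
        simpa using (tendsto_const_nhds (x := (1 : ℝ))).sub
          ((tendsto_const_div_atTop_nhds_zero_nat (M : ℝ)).comp hNt)
      exact tendsto_of_tendsto_of_tendsto_of_le_of_le hlow tendsto_const_nhds
        (fun i => one_sub_div_le_minAvg (hN1 i) (h0 i) (hc i)) (hub M)
    · exact tendsto_of_tendsto_of_tendsto_of_le_of_le (hcinf M ▸ hlim M) tendsto_const_nhds
        (fun i => apply_le_minAvg (hN1 i) (hanti i)) (hub M)
  · intro h
    by_contra! ⟨hNt, j, hj⟩
    obtain ⟨B, hB⟩ : ∃ B, ∀ i, N i < B := by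
      simpa [tendsto_atTop_atTop_iff_of_monotone (monotone_nat_of_le_succ hNmono)] using hNt
    have hge : 1 ≤ cinf j := le_of_tendsto_of_tendsto' (h (B * j)) (hlim j) fun i =>
      minAvg_le_of_mul_le (hN1 i) (hc i) (Nat.mul_le_mul_right j (hB i).le) fun _ hn => hanti i hn
    have hle : cinf j ≤ 1 := le_of_tendsto' (hlim j) fun i => (hrange i j).2
    exact hj (le_antisymm hle hge)

/-- For nondecreasing sequences `Nᵢ` of patch sizes and `cᵢ ↑ c_∞` of control functions
(each `cᵢ` nonincreasing with `cᵢ(0) = 1`), the condition `(Nᵢ → ∞) ∨ (c_∞ ≡ 1)` holds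
iff for every `M`, the minimal average acceptance probability over allocations of `M`
particles among the `Nᵢ` sites tends to `1` as `i → ∞`. -/
theorem stmt7 (N : ℕ → ℕ) (c : ℕ → ℕ → ℝ) (cinf : ℕ → ℝ)
    (hN1 : ∀ i, 1 ≤ N i) (hNmono : ∀ i, N i ≤ N (i + 1))
    (hrange : ∀ i j, c i j ∈ Set.Icc (0 : ℝ) 1)
    (h0 : ∀ i, c i 0 = 1)
    (hdec : ∀ i j, c i (j + 1) ≤ c i j)
    (hmono : ∀ i j, c i j ≤ c (i + 1) j)
    (hlim : ∀ j, Filter.Tendsto (fun i => c i j) Filter.atTop (nhds (cinf j))) :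
    (Filter.Tendsto N Filter.atTop Filter.atTop ∨ ∀ j, cinf j = 1) ↔
      ∀ M : ℕ, Filter.Tendsto (fun i => minAvg (N i) (c i) M) Filter.atTop (nhds 1) :=
  stmt7_general N c cinf hN1 hNmono hrange h0 hdec hlim
end

section
/- Let φ̄, λ̄ > 0 with φ̄ + 2dλ̄ > 1, and let x ∈ ℤ^d with |x| = 1. Then for the branching random walk expectation m(t,x) = E^{δ_0}[ξ_t(x)] given by the series formula, there exists t > 0 such that m(t,x) > 1. In fact, taking t = n, m(n,x) ≥ C·(φ̄+2dλ̄)^n·n^{-(d+1)/2} for n large, where C > 0 depends on λ̄, φ̄, d. -/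
open scoped Classical

/-- `ℓ¹` norm on `ℤ^d`. -/
def normOne {d : ℕ} (x : Fin d → ℤ) : ℕ := ∑ i, (x i).natAbs

/-- `pathCount d n k x` is the number `μ^{(n,k)}(0,x)` of paths on `ℤ^d` from `0` to `x` of
length `n` using exactly `k` loop-steps. -/
noncomputable def pathCount (d n k : ℕ) (x : Fin d → ℤ) : ℕ :=
  Nat.card {w : Fin (n + 1) → (Fin d → ℤ) //
    w 0 = 0 ∧ w (Fin.last n) = x ∧
    (∀ i : Fin n, normOne (fun t => w i.succ t - w i.castSucc t) ≤ 1) ∧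
    (Finset.univ.filter fun i : Fin n => w i.succ = w i.castSucc).card = k}

/-- The branching random walk expectation `m(t,x) = E^{δ₀}[ξ_t(x)]` as a path series. -/
noncomputable def brwSeries (d : ℕ) (phi lam : ℝ) (t : ℝ) (x : Fin d → ℤ) : ℝ :=
  Real.exp (-t) * ∑' n : ℕ, ∑ k ∈ Finset.range (n - normOne x + 1),
    (pathCount d n k x : ℝ) * phi ^ k * lam ^ (n - k) * t ^ n / (Nat.factorial n)

/-!
Expanding the series, `m(t, x) = e^{-t} ∑ₙ Wₙ(x) tⁿ / n!`, where `Wₙ(x)` is the total weight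
`∑ φ^(#loops) λ^(#moves)` of the lazy paths of length `n` from `0` to `x`. Splitting off the last
step, `Wₙ` is the `n`-fold convolution of `φ δ₀ + λ ∑ᵢ (δ_{eᵢ} + δ_{-eᵢ})`: it is symmetric, has
mass `ρⁿ` with `ρ = φ + 2dλ`, and second moment at most `n ρⁿ`. By Chebyshev, half of the mass of
`W_m` lies in a box of side `O(√m)`, so by Cauchy–Schwarz the return weight
`W_{2m}(0) = ∑_y W_m(y)²` is at least a constant times `ρ^{2m} m^{-d/2}`. A neighbour `x` of `0`
is reached from there in one or two more steps, and keeping only the `n`-th term of the series at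
`t = n`, Stirling's bound `e^{-n} nⁿ / n! ≥ 1 / (e √n)` gives `m(n, x) ≳ ρⁿ n^{-(d+1)/2}`, which
tends to infinity because `ρ > 1`.
-/

namespace BRW

open Finset Real Filter
open scoped Nat

variable {d : ℕ} {phi lam : ℝ}

/-! ### Unit vectors and boxes in `ℤ^d` -/

lemma normOne_eq_zero {x : Fin d → ℤ} : normOne x = 0 ↔ x = 0 := by
  simp [normOne, Finset.sum_eq_zero_iff, funext_iff]

lemma normOne_neg (x : Fin d → ℤ) : normOne (-x) = normOne x := by
  simp [normOne]

lemma normOne_add_le (x y : Fin d → ℤ) : normOne (x + y) ≤ normOne x + normOne y := by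
  rw [normOne, normOne, normOne, ← sum_add_distrib]
  exact sum_le_sum fun i _ => Int.natAbs_add_le _ _

lemma normOne_single (i : Fin d) (c : ℤ) : normOne (Pi.single i c) = c.natAbs := by
  simp [normOne, Pi.single_apply, apply_ite Int.natAbs]

lemma exists_eq_single_of_normOne_eq_one {x : Fin d → ℤ} (hx : normOne x = 1) :
    ∃ i, ∃ u : ℤˣ, x = Pi.single i (u : ℤ) := by
  obtain ⟨i, hi⟩ : ∃ i, x i ≠ 0 := by
    by_contra! h
    simp [normOne, h] at hx
  have hsplit := add_sum_erase univ (fun j => (x j).natAbs) (mem_univ i)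
  rw [← normOne, hx] at hsplit
  have hxi : (x i).natAbs = 1 := by have := Int.natAbs_pos.mpr hi; omega
  have hrest : ∀ j ≠ i, x j = 0 := by
    have h0 : ∑ j ∈ univ.erase i, (x j).natAbs = 0 := by omega
    exact fun j hj => Int.natAbs_eq_zero.mp <|
      sum_eq_zero_iff.mp h0 j (mem_erase.mpr ⟨hj, mem_univ j⟩)
  refine ⟨i, (Int.isUnit_iff_natAbs_eq.mpr hxi).unit, funext fun j => ?_⟩
  rcases eq_or_ne j i with rfl | hj
  · simp
  · simp [hj, hrest j hj]

def unitVecs (d : ℕ) : Finset (Fin d → ℤ) :=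
  univ.image fun p : Fin d × ℤˣ => Pi.single p.1 (p.2 : ℤ)

lemma mem_unitVecs {x : Fin d → ℤ} : x ∈ unitVecs d ↔ normOne x = 1 := by
  constructor
  · rintro hx
    obtain ⟨⟨i, u⟩, -, rfl⟩ := mem_image.mp hx
    simp [normOne_single]
  · intro hx
    obtain ⟨i, u, rfl⟩ := exists_eq_single_of_normOne_eq_one hx
    exact mem_image.mpr ⟨(i, u), mem_univ _, rfl⟩

lemma ne_zero_of_mem_unitVecs {x : Fin d → ℤ} (hx : x ∈ unitVecs d) : x ≠ 0 := by
  rintro rfl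
  simp [mem_unitVecs, normOne] at hx

lemma unitVecs_injective :
    Function.Injective fun p : Fin d × ℤˣ => (Pi.single p.1 (p.2 : ℤ) : Fin d → ℤ) := by
  rintro ⟨i, u⟩ ⟨j, v⟩ h
  have hi := congrFun h i
  have hij : i = j := by
    by_contra hne
    simp [hne] at hi
  subst hij
  simpa [Units.ext_iff] using hi

lemma card_unitVecs : #(unitVecs d) = 2 * d := by
  rw [unitVecs, card_image_of_injective _ unitVecs_injective]
  simp [mul_comm]

lemma sum_unitVecs {M : Type*} [AddCommMonoid M] (f : (Fin d → ℤ) → M) :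
    ∑ e ∈ unitVecs d, f e = ∑ i, ∑ u : ℤˣ, f (Pi.single i (u : ℤ)) := by
  rw [unitVecs, sum_image fun p _ q _ h => unitVecs_injective h, Fintype.sum_prod_type]

lemma sum_unitVecs_neg {M : Type*} [AddCommMonoid M] (f : (Fin d → ℤ) → M) :
    ∑ e ∈ unitVecs d, f (-e) = ∑ e ∈ unitVecs d, f e :=
  sum_nbij' (fun e => -e) (fun e => -e) (by simp [mem_unitVecs, normOne_neg])
    (by simp [mem_unitVecs, normOne_neg]) (by simp) (by simp) (by simp)

lemma sum_unitVecs_apply (i : Fin d) : ∑ e ∈ unitVecs d, (e i : ℝ) = 0 := by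
  have h := sum_unitVecs_neg fun e : Fin d → ℤ => (e i : ℝ)
  simp only [Pi.neg_apply, Int.cast_neg, sum_neg_distrib] at h
  linarith

lemma sum_unitVecs_apply_sq (i : Fin d) : ∑ e ∈ unitVecs d, (e i : ℝ) ^ 2 = 2 := by
  rw [sum_unitVecs]
  have hu : ∀ u : ℤˣ, ((u : ℤ) : ℝ) ^ 2 = 1 := fun u => by
    rw [← Int.cast_pow, ← Units.val_pow_eq_pow_val, Int.units_sq]; simp
  simp [Pi.single_apply, hu]

noncomputable def box (d R : ℕ) : Finset (Fin d → ℤ) :=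
  Fintype.piFinset fun _ => Icc (-(R : ℤ)) R

lemma mem_box {R : ℕ} {x : Fin d → ℤ} : x ∈ box d R ↔ ∀ i, |x i| ≤ R := by
  simp [box, abs_le]

lemma box_mono {R S : ℕ} (h : R ≤ S) : box d R ⊆ box d S := fun x hx =>
  mem_box.mpr fun i => (mem_box.mp hx i).trans (by exact_mod_cast h)

lemma card_box (R : ℕ) : #(box d R) = (2 * R + 1) ^ d := by
  simp only [box, Fintype.card_piFinset, Int.card_Icc, prod_const, card_univ, Fintype.card_fin]
  congr 1
  omega

lemma add_mem_box_succ {R : ℕ} {x e : Fin d → ℤ} (hx : x ∈ box d R) (he : e ∈ unitVecs d) :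
    x + e ∈ box d (R + 1) := by
  refine mem_box.mpr fun i => ?_
  have hei : |e i| ≤ 1 := by
    rw [Int.abs_eq_natAbs]
    exact_mod_cast (single_le_sum (f := fun j => (e j).natAbs) (fun _ _ => Nat.zero_le _)
      (mem_univ i)).trans (mem_unitVecs.mp he).le
  calc |(x + e) i| ≤ |x i| + |e i| := abs_add_le _ _
    _ ≤ (R + 1 : ℕ) := by push_cast; linarith [mem_box.mp hx i]

def sqNorm (x : Fin d → ℤ) : ℝ := ∑ i, (x i : ℝ) ^ 2

lemma sqNorm_nonneg (x : Fin d → ℤ) : 0 ≤ sqNorm x := sum_nonneg fun _ _ => sq_nonneg _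

lemma sq_lt_sqNorm_of_notMem_box {R : ℕ} {x : Fin d → ℤ} (hx : x ∉ box d R) :
    (R : ℝ) ^ 2 < sqNorm x := by
  obtain ⟨i, hi⟩ : ∃ i, (R : ℤ) < |x i| := by simpa [mem_box] using hx
  have hi' : (R : ℝ) < |(x i : ℝ)| := by exact_mod_cast hi
  calc (R : ℝ) ^ 2 < (x i : ℝ) ^ 2 := by rw [← sq_abs (x i : ℝ)]; gcongr
    _ ≤ sqNorm x := single_le_sum (f := fun j => (x j : ℝ) ^ 2) (fun _ _ => sq_nonneg _)
      (mem_univ i)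

lemma sum_unitVecs_sqNorm_add (x : Fin d → ℤ) :
    ∑ e ∈ unitVecs d, sqNorm (x + e) = 2 * d * sqNorm x + 2 * d := by
  have hcoord (i : Fin d) :
      ∑ e ∈ unitVecs d, ((x + e) i : ℝ) ^ 2 = 2 * d * (x i : ℝ) ^ 2 + 2 := by
    simp only [Pi.add_apply, Int.cast_add, add_sq, sum_add_distrib, ← mul_sum,
      sum_unitVecs_apply, sum_unitVecs_apply_sq, sum_const, card_unitVecs]
    simp
  simp only [sqNorm]
  rw [sum_comm, sum_congr rfl fun i _ => hcoord i, sum_add_distrib, ← mul_sum]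
  simp
  ring

/-! ### Weights of the lazy walk -/

/-- The total weight `∑ φ^(#loops) λ^(#moves)` of the lazy paths of length `n` from `0` to `x`
(see `sum_pathWeight`), computed by splitting off the last step. -/
noncomputable def walkWeight (d : ℕ) (phi lam : ℝ) : ℕ → (Fin d → ℤ) → ℝ
  | 0 => fun x => if x = 0 then 1 else 0
  | n + 1 => fun x =>
    phi * walkWeight d phi lam n x + lam * ∑ e ∈ unitVecs d, walkWeight d phi lam n (x - e)

lemma walkWeight_zero (x : Fin d → ℤ) : walkWeight d phi lam 0 x = if x = 0 then 1 else 0 := rfl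

lemma walkWeight_succ (n : ℕ) (x : Fin d → ℤ) :
    walkWeight d phi lam (n + 1) x =
      phi * walkWeight d phi lam n x + lam * ∑ e ∈ unitVecs d, walkWeight d phi lam n (x - e) :=
  rfl

lemma walkWeight_nonneg (hphi : 0 ≤ phi) (hlam : 0 ≤ lam) (n : ℕ) (x : Fin d → ℤ) :
    0 ≤ walkWeight d phi lam n x := by
  induction n generalizing x with
  | zero => rw [walkWeight_zero]; positivity
  | succ n ih =>
    rw [walkWeight_succ]
    have := sum_nonneg fun e (_ : e ∈ unitVecs d) => ih (x - e)
    have := ih x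
    positivity

lemma walkWeight_eq_zero_of_notMem_box {n : ℕ} {x : Fin d → ℤ} (hx : x ∉ box d n) :
    walkWeight d phi lam n x = 0 := by
  induction n generalizing x with
  | zero =>
    have : x ≠ 0 := by rintro rfl; exact hx (mem_box.mpr fun _ => by simp)
    simp [walkWeight_zero, this]
  | succ n ih =>
    rw [walkWeight_succ, ih fun h => hx (box_mono n.le_succ h),
      sum_eq_zero fun e he => ih fun h => hx (by simpa using add_mem_box_succ h he)]
    ring

lemma sum_walkWeight_mul_of_subset {n : ℕ} {s : Finset (Fin d → ℤ)} (hs : box d n ⊆ s)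
    (q : (Fin d → ℤ) → ℝ) :
    ∑ x ∈ s, walkWeight d phi lam n x * q x = ∑ x ∈ box d n, walkWeight d phi lam n x * q x :=
  (sum_subset hs fun _ _ hx => by rw [walkWeight_eq_zero_of_notMem_box hx, zero_mul]).symm

lemma sum_walkWeight_sub_mul {n : ℕ} {e : Fin d → ℤ} (he : e ∈ unitVecs d)
    (q : (Fin d → ℤ) → ℝ) :
    ∑ x ∈ box d (n + 1), walkWeight d phi lam n (x - e) * q x =
      ∑ y ∈ box d n, walkWeight d phi lam n y * q (y + e) := by
  have hmap : ∑ y ∈ box d n, walkWeight d phi lam n y * q (y + e) =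
      ∑ x ∈ (box d n).map (Equiv.addRight e).toEmbedding,
        walkWeight d phi lam n (x - e) * q x := by
    simp
  rw [hmap]
  refine (sum_subset (fun x hx => ?_) fun x _ hx => ?_).symm
  · obtain ⟨y, hy, rfl⟩ := mem_map.mp hx
    exact add_mem_box_succ hy he
  · rw [walkWeight_eq_zero_of_notMem_box fun h => hx (mem_map.mpr ⟨x - e, h, by simp⟩), zero_mul]

lemma sum_walkWeight_succ_mul (n : ℕ) (q : (Fin d → ℤ) → ℝ) :
    ∑ x ∈ box d (n + 1), walkWeight d phi lam (n + 1) x * q x =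
      phi * ∑ x ∈ box d n, walkWeight d phi lam n x * q x +
        lam * ∑ y ∈ box d n, walkWeight d phi lam n y * ∑ e ∈ unitVecs d, q (y + e) := by
  simp only [walkWeight_succ, add_mul, sum_add_distrib, mul_assoc, sum_mul, ← mul_sum]
  rw [sum_walkWeight_mul_of_subset (box_mono n.le_succ), sum_comm,
    sum_congr rfl fun e he => sum_walkWeight_sub_mul he q, sum_comm]
  simp only [mul_sum]

lemma sum_walkWeight (n : ℕ) :
    ∑ x ∈ box d n, walkWeight d phi lam n x = (phi + 2 * d * lam) ^ n := by
  induction n with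
  | zero =>
    have : (0 : Fin d → ℤ) ∈ box d 0 := mem_box.mpr fun _ => by simp
    simp [walkWeight_zero, this]
  | succ n ih =>
    have h := sum_walkWeight_succ_mul (d := d) (phi := phi) (lam := lam) n fun _ => 1
    simp only [mul_one, sum_const, card_unitVecs, nsmul_eq_mul, ← sum_mul, ih] at h
    rw [h, pow_succ]
    push_cast
    ring

lemma sum_walkWeight_mul_sqNorm_le (hphi : 0 ≤ phi) (hlam : 0 ≤ lam) (n : ℕ) :
    ∑ x ∈ box d n, walkWeight d phi lam n x * sqNorm x ≤ n * (phi + 2 * d * lam) ^ n := by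
  induction n with
  | zero => simp [box, walkWeight_zero, sqNorm]
  | succ n ih =>
    have hmass := sum_walkWeight (d := d) (phi := phi) (lam := lam) n
    have hmoves : ∑ y ∈ box d n, walkWeight d phi lam n y * ∑ e ∈ unitVecs d, sqNorm (y + e) =
        2 * d * ∑ y ∈ box d n, walkWeight d phi lam n y * sqNorm y +
          2 * d * (phi + 2 * d * lam) ^ n := by
      rw [← hmass, mul_sum, mul_sum, ← sum_add_distrib]
      exact sum_congr rfl fun y _ => by rw [sum_unitVecs_sqNorm_add]; ring
    rw [sum_walkWeight_succ_mul, hmoves]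
    have hρ : 0 ≤ phi + 2 * d * lam := by positivity
    have hpow : 0 ≤ (phi + 2 * d * lam) ^ n := pow_nonneg hρ n
    have hρM := mul_le_mul_of_nonneg_left ih hρ
    push_cast
    rw [pow_succ]
    nlinarith [mul_nonneg hphi hpow]

/-! ### The return weight -/

lemma walkWeight_neg (n : ℕ) (x : Fin d → ℤ) :
    walkWeight d phi lam n (-x) = walkWeight d phi lam n x := by
  induction n generalizing x with
  | zero => simp [walkWeight_zero]
  | succ n ih =>
    rw [walkWeight_succ, walkWeight_succ, ih,
      ← sum_unitVecs_neg fun e => walkWeight d phi lam n (x - e)]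
    congr 2
    exact sum_congr rfl fun e _ => by rw [← ih]; congr 1; abel

lemma walkWeight_add (m n : ℕ) (z : Fin d → ℤ) :
    walkWeight d phi lam (m + n) z =
      ∑ y ∈ box d m, walkWeight d phi lam m y * walkWeight d phi lam n (z - y) := by
  induction n generalizing z with
  | zero =>
    simp only [Nat.add_zero, walkWeight_zero, sub_eq_zero, mul_ite, mul_one, mul_zero]
    rw [sum_ite_eq]
    split_ifs with h
    · rfl
    · exact walkWeight_eq_zero_of_notMem_box h
  | succ n ih =>
    rw [← add_assoc, walkWeight_succ, ih, mul_sum, sum_congr rfl fun e _ => ih (z - e), sum_comm,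
      mul_sum, ← sum_add_distrib]
    refine sum_congr rfl fun y _ => ?_
    rw [walkWeight_succ, ← mul_sum]
    simp only [sub_right_comm z]
    ring

lemma walkWeight_add_self_zero (m : ℕ) :
    walkWeight d phi lam (m + m) 0 = ∑ y ∈ box d m, walkWeight d phi lam m y ^ 2 := by
  rw [walkWeight_add]
  exact sum_congr rfl fun y _ => by rw [zero_sub, walkWeight_neg, sq]

lemma sq_sum_walkWeight_box_le (R m : ℕ) :
    (∑ x ∈ box d R, walkWeight d phi lam m x) ^ 2 ≤
      (2 * R + 1) ^ d * walkWeight d phi lam (m + m) 0 := by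
  have hsq : ∑ x ∈ box d R, walkWeight d phi lam m x ^ 2 ≤ walkWeight d phi lam (m + m) 0 := by
    rw [walkWeight_add_self_zero]
    simp only [sq]
    rw [← sum_walkWeight_mul_of_subset (subset_union_left (s₂ := box d R))]
    exact sum_le_sum_of_subset_of_nonneg subset_union_right fun x _ _ =>
      mul_self_nonneg (walkWeight d phi lam m x)
  calc (∑ x ∈ box d R, walkWeight d phi lam m x) ^ 2
      ≤ #(box d R) * ∑ x ∈ box d R, walkWeight d phi lam m x ^ 2 := sq_sum_le_card_mul_sum_sq
    _ ≤ (2 * R + 1) ^ d * walkWeight d phi lam (m + m) 0 := by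
      rw [card_box]
      push_cast
      gcongr

lemma pow_le_sum_walkWeight_box_add (hphi : 0 ≤ phi) (hlam : 0 ≤ lam) {R : ℕ} (hR : 0 < R) (m : ℕ) :
    (phi + 2 * d * lam) ^ m ≤
      ∑ x ∈ box d R, walkWeight d phi lam m x + m * (phi + 2 * d * lam) ^ m / R ^ 2 := by
  have hR2 : (0 : ℝ) < (R : ℝ) ^ 2 := by positivity
  have hW := walkWeight_nonneg (d := d) hphi hlam m
  calc (phi + 2 * d * lam) ^ m
      = ∑ x ∈ box d m with x ∈ box d R, walkWeight d phi lam m x +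
          ∑ x ∈ box d m with x ∉ box d R, walkWeight d phi lam m x := by
        rw [sum_filter_add_sum_filter_not, sum_walkWeight]
    _ ≤ _ := add_le_add
      (sum_le_sum_of_subset_of_nonneg (fun x hx => (mem_filter.mp hx).2) fun x _ _ => hW x) ?_
  calc ∑ x ∈ box d m with x ∉ box d R, walkWeight d phi lam m x
      ≤ ∑ x ∈ box d m with x ∉ box d R, walkWeight d phi lam m x * sqNorm x / R ^ 2 := by
        refine sum_le_sum fun x hx => ?_
        rw [le_div_iff₀ hR2]
        exact mul_le_mul_of_nonneg_left
          (sq_lt_sqNorm_of_notMem_box (mem_filter.mp hx).2).le (hW x)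
    _ ≤ ∑ x ∈ box d m, walkWeight d phi lam m x * sqNorm x / R ^ 2 :=
        sum_le_sum_of_subset_of_nonneg (filter_subset _ _) fun x _ _ =>
          div_nonneg (mul_nonneg (hW x) (sqNorm_nonneg x)) hR2.le
    _ ≤ m * (phi + 2 * d * lam) ^ m / R ^ 2 := by
        rw [← sum_div]
        gcongr
        exact sum_walkWeight_mul_sqNorm_le hphi hlam m

lemma pow_le_walkWeight_add_self_zero (hphi : 0 ≤ phi) (hlam : 0 ≤ lam) {m : ℕ} (hm : 1 ≤ m) :
    (phi + 2 * d * lam) ^ (m + m) ≤ 4 * (6 * √m) ^ d * walkWeight d phi lam (m + m) 0 := by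
  set ρ := phi + 2 * d * lam
  -- `R² > 2m`, so by Chebyshev `box d R` carries half of the mass of `W_m`; and `2R + 1 ≤ 6√m`.
  set R := Nat.sqrt (2 * m) + 1
  have hRm : (2 * m : ℝ) < R ^ 2 := by exact_mod_cast (sq R ▸ Nat.lt_succ_sqrt (2 * m))
  have hsqrt_m : (1 : ℝ) ≤ √m := Real.one_le_sqrt.mpr (by exact_mod_cast hm)
  have hR : (2 * R + 1 : ℝ) ≤ 6 * √m := by
    have h2m : √(2 * m : ℝ) ≤ 3 / 2 * √m := by
      rw [Real.sqrt_le_left (by positivity), mul_pow, Real.sq_sqrt (by positivity)]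
      nlinarith
    have := Real.nat_sqrt_le_real_sqrt (a := 2 * m)
    push_cast at this
    simp only [R]
    push_cast
    linarith
  have hhalf : ρ ^ m ≤ 2 * ∑ x ∈ box d R, walkWeight d phi lam m x := by
    have h := pow_le_sum_walkWeight_box_add (d := d) hphi hlam (R := R) (Nat.succ_pos _) m
    have hρ : 0 ≤ ρ ^ m := pow_nonneg (by positivity) m
    have : m * ρ ^ m / R ^ 2 ≤ ρ ^ m / 2 := by
      rw [div_le_div_iff₀ (by positivity) two_pos]
      nlinarith
    linarith
  calc ρ ^ (m + m) = (ρ ^ m) ^ 2 := by ring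
    _ ≤ (2 * ∑ x ∈ box d R, walkWeight d phi lam m x) ^ 2 := by gcongr
    _ = 4 * (∑ x ∈ box d R, walkWeight d phi lam m x) ^ 2 := by ring
    _ ≤ 4 * ((2 * R + 1) ^ d * walkWeight d phi lam (m + m) 0) := by
      gcongr; exact sq_sum_walkWeight_box_le R m
    _ ≤ 4 * (6 * √m) ^ d * walkWeight d phi lam (m + m) 0 := by
      rw [← mul_assoc]
      gcongr
      exact walkWeight_nonneg hphi hlam _ _

/-! ### Lazy paths -/

def IsLazyPath (x : Fin d → ℤ) {n : ℕ} (w : Fin (n + 1) → Fin d → ℤ) : Prop :=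
  w 0 = 0 ∧ w (Fin.last n) = x ∧ ∀ i : Fin n, normOne (w i.succ - w i.castSucc) ≤ 1

def loopCount {n : ℕ} (w : Fin (n + 1) → Fin d → ℤ) : ℕ :=
  #{i : Fin n | w i.succ = w i.castSucc}

lemma pathCount_eq_card (n k : ℕ) (x : Fin d → ℤ) :
    pathCount d n k x = Nat.card {w : {w : Fin (n + 1) → Fin d → ℤ // IsLazyPath x w} //
      loopCount w.1 = k} := by
  refine Nat.card_congr ((Equiv.subtypeSubtypeEquivSubtypeInter (fun w => IsLazyPath x w)
    (fun w => loopCount w = k)).trans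
    (Equiv.subtypeEquivRight fun w => ?_)).symm
  simp only [IsLazyPath, loopCount, and_assoc]
  rfl

lemma loopCount_le {n : ℕ} (w : Fin (n + 1) → Fin d → ℤ) : loopCount w ≤ n :=
  (card_filter_le _ _).trans (by simp)

lemma loopCount_eq_loopCount_init {n : ℕ} (w : Fin (n + 1 + 1) → Fin d → ℤ) :
    loopCount w = loopCount (Fin.init w) +
      if w (Fin.last (n + 1)) = w (Fin.last n).castSucc then 1 else 0 := by
  rw [loopCount, loopCount, card_filter, card_filter, Fin.sum_univ_castSucc]
  rfl

def lazySteps (d : ℕ) : Finset (Fin d → ℤ) := insert 0 (unitVecs d)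

lemma mem_lazySteps {s : Fin d → ℤ} : s ∈ lazySteps d ↔ normOne s ≤ 1 := by
  rw [lazySteps, mem_insert, mem_unitVecs, ← normOne_eq_zero]
  omega

namespace IsLazyPath

variable {n : ℕ} {x : Fin d → ℤ}

lemma sub_mem_lazySteps {w : Fin (n + 1 + 1) → Fin d → ℤ} (hw : IsLazyPath x w) :
    x - w (Fin.last n).castSucc ∈ lazySteps d := by
  rw [mem_lazySteps, ← hw.2.1, ← Fin.succ_last]
  exact hw.2.2 (Fin.last n)

lemma init {w : Fin (n + 1 + 1) → Fin d → ℤ} (hw : IsLazyPath x w) :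
    IsLazyPath (w (Fin.last n).castSucc) (Fin.init w) :=
  ⟨hw.1, rfl, fun i => by
    have h := hw.2.2 i.castSucc
    rw [Fin.succ_castSucc] at h
    exact h⟩

lemma snoc {s : Fin d → ℤ} (hs : s ∈ lazySteps d) {w : Fin (n + 1) → Fin d → ℤ}
    (hw : IsLazyPath (x - s) w) : IsLazyPath x (Fin.snoc w x : Fin (n + 1 + 1) → Fin d → ℤ) := by
  refine ⟨?_, Fin.snoc_last _ _, fun i => ?_⟩
  · rw [← Fin.castSucc_zero, Fin.snoc_castSucc]
    exact hw.1
  induction i using Fin.lastCases with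
  | last =>
    rw [Fin.succ_last, Fin.snoc_last, Fin.snoc_castSucc, hw.2.1, sub_sub_cancel]
    exact mem_lazySteps.mp hs
  | cast i =>
    rw [Fin.succ_castSucc, Fin.snoc_castSucc, Fin.snoc_castSucc]
    exact hw.2.2 i

end IsLazyPath

def lazyPathSnocEquiv (n : ℕ) (x : Fin d → ℤ) :
    {w : Fin (n + 1 + 1) → Fin d → ℤ // IsLazyPath x w} ≃
      Σ s : lazySteps d, {w : Fin (n + 1) → Fin d → ℤ // IsLazyPath (x - s.1) w} where
  toFun w := ⟨⟨_, w.2.sub_mem_lazySteps⟩, ⟨Fin.init w.1, by rw [sub_sub_cancel]; exact w.2.init⟩⟩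
  invFun p := ⟨Fin.snoc p.2.1 x, p.2.2.snoc p.1.2⟩
  left_inv w := Subtype.ext <| by
    conv_rhs => rw [← Fin.snoc_init_self w.1]
    rw [w.2.2.1]
  right_inv p :=
    Sigma.subtype_ext (Subtype.ext <| by simp [p.2.2.2.1]) (by funext i; simp [Fin.init])

instance finite_isLazyPath (n : ℕ) (x : Fin d → ℤ) :
    Finite {w : Fin (n + 1) → Fin d → ℤ // IsLazyPath x w} := by
  induction n generalizing x with
  | zero =>
    refine @Finite.of_subsingleton _ ⟨fun w v => Subtype.ext <| funext fun i => ?_⟩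
    rw [Fin.fin_one_eq_zero i, w.2.1, v.2.1]
  | succ n ih => exact Finite.of_equiv _ (lazyPathSnocEquiv n x).symm

lemma IsLazyPath.normOne_add_loopCount_le {n : ℕ} {x : Fin d → ℤ} {w : Fin (n + 1) → Fin d → ℤ}
    (hw : IsLazyPath x w) : normOne x + loopCount w ≤ n := by
  induction n generalizing x with
  | zero =>
    have hx : x = 0 := hw.2.1.symm.trans hw.1
    simp [hx, normOne, loopCount]
  | succ n ih =>
    have hinit := ih hw.init
    have hstep := mem_lazySteps.mp hw.sub_mem_lazySteps
    have htri := normOne_add_le (w (Fin.last n).castSucc) (x - w (Fin.last n).castSucc)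
    rw [add_sub_cancel] at htri
    rw [loopCount_eq_loopCount_init, hw.2.1]
    split_ifs with hloop
    · rw [hloop]
      omega
    · have : normOne (x - w (Fin.last n).castSucc) ≠ 0 := fun h =>
        hloop (sub_eq_zero.mp (normOne_eq_zero.mp h))
      omega

noncomputable def pathWeight (phi lam : ℝ) {n : ℕ} (w : Fin (n + 1) → Fin d → ℤ) : ℝ :=
  phi ^ loopCount w * lam ^ (n - loopCount w)

lemma pathWeight_eq_mul_pathWeight_init {n : ℕ} (w : Fin (n + 1 + 1) → Fin d → ℤ) :
    pathWeight phi lam w = (if w (Fin.last (n + 1)) = w (Fin.last n).castSucc then phi else lam) *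
      pathWeight phi lam (Fin.init w) := by
  have hle := loopCount_le (Fin.init w)
  rw [pathWeight, pathWeight, loopCount_eq_loopCount_init]
  split_ifs
  · rw [Nat.add_sub_add_right, pow_succ]
    ring
  · rw [add_zero, Nat.sub_add_comm hle, pow_succ]
    ring

lemma sum_pathWeight (n : ℕ) (x : Fin d → ℤ)
    [Fintype {w : Fin (n + 1) → Fin d → ℤ // IsLazyPath x w}] :
    ∑ w : {w : Fin (n + 1) → Fin d → ℤ // IsLazyPath x w}, pathWeight phi lam w.1 =
      walkWeight d phi lam n x := by
  induction n generalizing x with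
  | zero =>
    rw [walkWeight_zero]
    split_ifs with hx
    · subst hx
      have : Unique {w : Fin 1 → Fin d → ℤ // IsLazyPath 0 w} :=
        { default := ⟨fun _ => 0, rfl, rfl, Fin.elim0⟩
          uniq := fun w => Subtype.ext <| funext fun i => by rw [Fin.fin_one_eq_zero i, w.2.1] }
      simp [pathWeight, loopCount]
    · have : IsEmpty {w : Fin 1 → Fin d → ℤ // IsLazyPath x w} :=
        ⟨fun w => hx (w.2.2.1.symm.trans w.2.1)⟩
      simp
  | succ n ih =>
    have (y : Fin d → ℤ) : Fintype {w : Fin (n + 1) → Fin d → ℤ // IsLazyPath y w} :=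
      Fintype.ofFinite _
    rw [Fintype.sum_equiv (lazyPathSnocEquiv n x) _
      (fun p => (if p.1.1 = 0 then phi else lam) * pathWeight phi lam p.2.1) fun w => by
        rw [pathWeight_eq_mul_pathWeight_init, w.2.2.1]
        simp [lazyPathSnocEquiv, sub_eq_zero]]
    rw [Fintype.sum_sigma]
    calc _ = ∑ s : lazySteps d, (if s.1 = 0 then phi else lam) * walkWeight d phi lam n (x - s) :=
          sum_congr rfl fun s _ => by rw [← ih (x - s), mul_sum]
      _ = ∑ s ∈ lazySteps d, (if s = 0 then phi else lam) * walkWeight d phi lam n (x - s) :=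
          sum_coe_sort (lazySteps d) fun s =>
            (if s = 0 then phi else lam) * walkWeight d phi lam n (x - s)
      _ = walkWeight d phi lam (n + 1) x := by
          rw [lazySteps, sum_insert fun h => ne_zero_of_mem_unitVecs h rfl, walkWeight_succ,
            mul_sum, if_pos rfl, sub_zero]
          exact congrArg _ <| sum_congr rfl fun e he => by rw [if_neg (ne_zero_of_mem_unitVecs he)]

lemma sum_range_pathCount (n : ℕ) (x : Fin d → ℤ) :
    ∑ k ∈ range (n - normOne x + 1), (pathCount d n k x : ℝ) * phi ^ k * lam ^ (n - k) =
      walkWeight d phi lam n x := by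
  have := Fintype.ofFinite {w : Fin (n + 1) → Fin d → ℤ // IsLazyPath x w}
  have hmaps : ∀ w ∈ (univ : Finset {w : Fin (n + 1) → Fin d → ℤ // IsLazyPath x w}),
      loopCount w.1 ∈ range (n - normOne x + 1) := fun w _ => by
    have := w.2.normOne_add_loopCount_le
    rw [mem_range]
    omega
  rw [← sum_pathWeight, ← sum_fiberwise_of_maps_to hmaps]
  refine sum_congr rfl fun k _ => ?_
  rw [pathCount_eq_card, Nat.card_eq_fintype_card, Fintype.card_subtype, card_eq_sum_ones,
    Nat.cast_sum, sum_mul, sum_mul]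
  refine sum_congr rfl fun w hw => ?_
  rw [pathWeight, (mem_filter.mp hw).2, Nat.cast_one, one_mul]

/-! ### The path series -/

lemma walkWeight_le_pow (hphi : 0 ≤ phi) (hlam : 0 ≤ lam) (n : ℕ) (x : Fin d → ℤ) :
    walkWeight d phi lam n x ≤ (phi + 2 * d * lam) ^ n := by
  by_cases hx : x ∈ box d n
  · rw [← sum_walkWeight]
    exact single_le_sum (fun y _ => walkWeight_nonneg hphi hlam n y) hx
  · rw [walkWeight_eq_zero_of_notMem_box hx]
    positivity

lemma brwSeries_eq_tsum (t : ℝ) (x : Fin d → ℤ) :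
    brwSeries d phi lam t x = exp (-t) * ∑' n, walkWeight d phi lam n x * t ^ n / n ! := by
  rw [brwSeries]
  congr 1
  exact tsum_congr fun n => by rw [← sum_range_pathCount, sum_mul, sum_div]

lemma exp_neg_mul_le_brwSeries (hphi : 0 ≤ phi) (hlam : 0 ≤ lam) {t : ℝ} (ht : 0 ≤ t)
    (x : Fin d → ℤ) (n : ℕ) :
    exp (-t) * (walkWeight d phi lam n x * t ^ n / n !) ≤ brwSeries d phi lam t x := by
  have hterm (m : ℕ) : 0 ≤ walkWeight d phi lam m x * t ^ m / m ! := by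
    have := walkWeight_nonneg hphi hlam m x
    positivity
  have hsummable : Summable fun m => walkWeight d phi lam m x * t ^ m / m ! := by
    refine .of_nonneg_of_le hterm (fun m => ?_)
      (summable_pow_div_factorial ((phi + 2 * d * lam) * t))
    rw [mul_pow]
    gcongr
    exact walkWeight_le_pow hphi hlam m x
  rw [brwSeries_eq_tsum]
  gcongr
  exact hsummable.le_tsum n fun m _ => hterm m

lemma factorial_le_exp_one_mul_sqrt {n : ℕ} (hn : n ≠ 0) :
    (n ! : ℝ) ≤ exp 1 * √n * (n / exp 1) ^ n := by
  obtain ⟨j, rfl⟩ := Nat.exists_eq_add_one_of_ne_zero hn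
  have h : Stirling.stirlingSeq (j + 1) ≤ exp 1 / √2 := by
    simpa [Stirling.stirlingSeq_one] using Stirling.stirlingSeq'_antitone (Nat.zero_le j)
  rw [Stirling.stirlingSeq, div_le_div_iff₀ (by positivity) (by positivity),
    sqrt_mul zero_le_two] at h
  refine le_of_mul_le_mul_right ?_ (sqrt_pos.mpr (zero_lt_two' ℝ))
  linarith

lemma inv_exp_one_mul_sqrt_le {n : ℕ} (hn : n ≠ 0) :
    (exp 1 * √n)⁻¹ ≤ exp (-n) * n ^ n / n ! := by
  calc (exp 1 * √n)⁻¹ = exp (-n) * n ^ n / (exp 1 * √n * (n / exp 1) ^ n) := by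
        rw [div_pow, exp_one_pow, exp_neg]
        field_simp
    _ ≤ exp (-n) * n ^ n / n ! := by
        gcongr
        exact factorial_le_exp_one_mul_sqrt hn

/-! ### Neighbours of the origin -/

lemma phi_mul_walkWeight_le (hphi : 0 ≤ phi) (hlam : 0 ≤ lam) (n : ℕ) (x : Fin d → ℤ) :
    phi * walkWeight d phi lam n x ≤ walkWeight d phi lam (n + 1) x := by
  rw [walkWeight_succ, le_add_iff_nonneg_right]
  exact mul_nonneg hlam (sum_nonneg fun e _ => walkWeight_nonneg hphi hlam n _)

lemma lam_mul_walkWeight_zero_le (hphi : 0 ≤ phi) (hlam : 0 ≤ lam) {x : Fin d → ℤ}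
    (hx : normOne x = 1) (n : ℕ) :
    lam * walkWeight d phi lam n 0 ≤ walkWeight d phi lam (n + 1) x := by
  have hsingle : walkWeight d phi lam n 0 ≤ ∑ e ∈ unitVecs d, walkWeight d phi lam n (x - e) := by
    simpa using single_le_sum (f := fun e => walkWeight d phi lam n (x - e))
      (fun e _ => walkWeight_nonneg hphi hlam n _) (mem_unitVecs.mpr hx)
  rw [walkWeight_succ]
  nlinarith [mul_le_mul_of_nonneg_left hsingle hlam, walkWeight_nonneg hphi hlam n x]

/-- Return to `0` in an even number `2m` of steps, then loop at most once and move once. -/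
lemma pow_le_walkWeight_of_normOne_eq_one (hphi : 0 ≤ phi) (hlam : 0 ≤ lam)
    (hρ : 1 ≤ phi + 2 * d * lam) {x : Fin d → ℤ} (hx : normOne x = 1) {n : ℕ} (hn : 3 ≤ n) :
    min lam (phi * lam) * (phi + 2 * d * lam) ^ n ≤
      4 * (phi + 2 * d * lam) ^ 2 * (6 * √n) ^ d * walkWeight d phi lam n x := by
  set ρ := phi + 2 * d * lam
  set m := (n - 1) / 2
  have hm : 1 ≤ m := by omega
  have hreturn :
      min lam (phi * lam) * walkWeight d phi lam (m + m) 0 ≤ walkWeight d phi lam n x := by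
    have hW := walkWeight_nonneg hphi hlam (m + m) (0 : Fin d → ℤ)
    rcases (by omega : n = m + m + 1 ∨ n = m + m + 2) with hn | hn <;> rw [hn]
    · exact (mul_le_mul_of_nonneg_right (min_le_left _ _) hW).trans
        (lam_mul_walkWeight_zero_le hphi hlam hx _)
    · calc min lam (phi * lam) * walkWeight d phi lam (m + m) 0
          ≤ phi * (lam * walkWeight d phi lam (m + m) 0) := by
            rw [← mul_assoc]; exact mul_le_mul_of_nonneg_right (min_le_right _ _) hW
        _ ≤ phi * walkWeight d phi lam (m + m + 1) x :=
            mul_le_mul_of_nonneg_left (lam_mul_walkWeight_zero_le hphi hlam hx _) hphi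
        _ ≤ walkWeight d phi lam (m + m + 2) x := phi_mul_walkWeight_le hphi hlam _ x
  have hpow : ρ ^ n ≤ ρ ^ 2 * ρ ^ (m + m) := by
    rw [← pow_add]
    exact pow_le_pow_right₀ hρ (by omega)
  have hsqrt : (6 * √m) ^ d ≤ (6 * √n) ^ d := by
    gcongr
    omega
  have hmin : 0 ≤ min lam (phi * lam) := le_min hlam (mul_nonneg hphi hlam)
  calc min lam (phi * lam) * ρ ^ n
      ≤ min lam (phi * lam) * (ρ ^ 2 * (4 * (6 * √m) ^ d * walkWeight d phi lam (m + m) 0)) := by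
        gcongr
        exact hpow.trans (by gcongr; exact pow_le_walkWeight_add_self_zero hphi hlam hm)
    _ = 4 * ρ ^ 2 * (6 * √m) ^ d * (min lam (phi * lam) * walkWeight d phi lam (m + m) 0) := by
        ring
    _ ≤ 4 * ρ ^ 2 * (6 * √n) ^ d * walkWeight d phi lam n x := by
        gcongr
        exact mul_nonneg hmin (walkWeight_nonneg hphi hlam _ _)

lemma mul_pow_mul_rpow_le_brwSeries (hphi : 0 ≤ phi) (hlam : 0 ≤ lam)
    (hρ : 1 ≤ phi + 2 * d * lam) {x : Fin d → ℤ} (hx : normOne x = 1) {n : ℕ} (hn : 3 ≤ n) :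
    min lam (phi * lam) / (4 * (phi + 2 * d * lam) ^ 2 * 6 ^ d * exp 1) *
        (phi + 2 * d * lam) ^ n * (n : ℝ) ^ (-(((d : ℝ) + 1) / 2)) ≤
      brwSeries d phi lam n x := by
  set ρ := phi + 2 * d * lam
  have hn0 : (0 : ℝ) < n := by positivity
  have hrpow : (n : ℝ) ^ (-(((d : ℝ) + 1) / 2)) = (√n ^ d * √n)⁻¹ := by
    rw [rpow_neg hn0.le, ← pow_succ, sqrt_eq_rpow, ← rpow_natCast, ← rpow_mul hn0.le]
    push_cast
    ring_nf
  have hW := pow_le_walkWeight_of_normOne_eq_one hphi hlam hρ hx hn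
  calc min lam (phi * lam) / (4 * ρ ^ 2 * 6 ^ d * exp 1) * ρ ^ n * (n : ℝ) ^ (-(((d : ℝ) + 1) / 2))
      = min lam (phi * lam) * ρ ^ n / (4 * ρ ^ 2 * (6 * √n) ^ d) * (exp 1 * √n)⁻¹ := by
        rw [hrpow, mul_pow]
        field_simp
    _ ≤ walkWeight d phi lam n x * (exp (-n) * n ^ n / n !) := by
        gcongr
        · exact walkWeight_nonneg hphi hlam n x
        · rw [div_le_iff₀ (by positivity)]
          linarith
        · exact inv_exp_one_mul_sqrt_le (by omega)
    _ = exp (-n) * (walkWeight d phi lam n x * n ^ n / n !) := by ring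
    _ ≤ brwSeries d phi lam n x := exp_neg_mul_le_brwSeries hphi hlam (Nat.cast_nonneg n) x n

lemma eventually_one_lt_mul_pow_mul_rpow {C r : ℝ} (hC : 0 < C) (hr : 1 < r) (s : ℝ) :
    ∀ᶠ n : ℕ in atTop, 1 < C * r ^ n * (n : ℝ) ^ (-s) := by
  filter_upwards [(tendsto_pow_const_div_const_pow_of_one_lt ⌈s⌉₊ hr).eventually
    (gt_mem_nhds hC), eventually_ge_atTop 1] with n hsmall hn
  have hn' : (1 : ℝ) ≤ n := by exact_mod_cast hn
  have hk : (n : ℝ) ^ (-(⌈s⌉₊ : ℝ)) ≤ n ^ (-s) :=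
    rpow_le_rpow_of_exponent_le hn' (neg_le_neg (Nat.le_ceil s))
  rw [rpow_neg (by positivity), rpow_natCast] at hk
  rw [div_lt_iff₀ (by positivity)] at hsmall
  calc 1 < C * r ^ n * ((n : ℝ) ^ ⌈s⌉₊)⁻¹ := by
        rw [← div_eq_mul_inv, one_lt_div (by positivity)]
        linarith
    _ ≤ C * r ^ n * (n : ℝ) ^ (-s) := by gcongr

end BRW

open BRW in
theorem stmt12_general (d : ℕ) (phi lam : ℝ) (hphi : 0 < phi) (hlam : 0 < lam)
    (hsup : 1 < phi + 2 * d * lam) (x : Fin d → ℤ) (hx : normOne x = 1) :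
    (∃ t > (0 : ℝ), 1 < brwSeries d phi lam t x) ∧
    ∃ C > (0 : ℝ), ∃ n₀ : ℕ, ∀ n ≥ n₀,
      C * (phi + 2 * d * lam) ^ n * (n : ℝ) ^ (-(((d : ℝ) + 1) / 2)) ≤
        brwSeries d phi lam n x := by
  set C := min lam (phi * lam) / (4 * (phi + 2 * d * lam) ^ 2 * 6 ^ d * Real.exp 1)
  have hC : 0 < C := by
    have := lt_min hlam (mul_pos hphi hlam)
    positivity
  have hlower (n : ℕ) (hn : n ≥ 3) :=
    mul_pow_mul_rpow_le_brwSeries hphi.le hlam.le hsup.le hx hn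
  refine ⟨?_, C, hC, 3, hlower⟩
  obtain ⟨n, hgt, hn⟩ := ((eventually_one_lt_mul_pow_mul_rpow hC hsup _).and
    (Filter.eventually_ge_atTop 3)).exists
  exact ⟨n, by positivity, hgt.trans_le (hlower n hn)⟩

/-- If `φ̄ + 2dλ̄ > 1` and `|x| = 1`, then the branching random walk expectation satisfies
`m(n,x) ≥ C·(φ̄+2dλ̄)^n·n^{-(d+1)/2}` for large `n`; in particular `m(t,x) > 1` for some
`t > 0`. -/
theorem stmt12 (d : ℕ) (hd : 1 ≤ d) (phi lam : ℝ) (hphi : 0 < phi) (hlam : 0 < lam)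
    (hsup : 1 < phi + 2 * d * lam) (x : Fin d → ℤ) (hx : normOne x = 1) :
    (∃ t > (0 : ℝ), 1 < brwSeries d phi lam t x) ∧
    ∃ C > (0 : ℝ), ∃ n₀ : ℕ, ∀ n ≥ n₀,
      C * (phi + 2 * d * lam) ^ n * (n : ℝ) ^ (-(((d : ℝ) + 1) / 2)) ≤
        brwSeries d phi lam n x :=
  stmt12_general d phi lam hphi hlam hsup x hx
end
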